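/- Let L : [0,∞) → (0,∞) be measurable, and suppose there exist r₀ ≥ 0 and ζ > 0 such that L is differentiable and nonincreasing on [r₀, ∞), L(x) → 0 as x → ∞, and x·L(x) ≥ ζ·(−L′(x)) for all x ≥ r₀. Suppose moreover there is λ_c ≥ 0 such that ∫_{r₀}^∞ (r / L(r)²)·e^{−πλ r²} dr < ∞ for all λ > λ_c. Then for every λ > max(λ_c, 1/(πζ)), the double integral ∫_0^∞ ∫_0^∞ 2πλ·r·t·exp( −πλr² − 2πλ·t·∫_{r}^∞ x·L(x)/(1+t·L(x)) dx ) dr dt is finite. -/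

import Mathlib

/-!
Put `β = 2πλζ`; the condition `λ > 1/(πζ)` says `β > 2`. Since `ζ (−L′) ≤ x L` and
`−L′/(1 + tL)` is the derivative of `−log(1 + tL)/t`, the inner integral over `(r, ∞)` is at
least `(ζ/t) log(1 + t L(m))` with `m = max r r₀`, so the integrand is at most
`2πλ r e^{−πλr²} · t (1 + t L(m))^{−β}`. Bounding `t` by `(1 + t c)/c` gives
`∫₀^∞ t (1 + t c)^{−β} dt ≤ 1/((β − 2) c²)`, so after Tonelli what remains is a multiple of
`∫₀^∞ r e^{−πλr²} / L(max r r₀)² dr`, finite on `(r₀, ∞)` by hypothesis and on the bounded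
interval `(0, r₀]` because the integrand is continuous there.
-/

open MeasureTheory Set Filter Topology Real
open scoped ENNReal

/-- The exponential `x ↦ e^{-x}` extended to `[0,∞]`, with `e^{-∞} = 0`. -/
noncomputable def expNeg (x : ENNReal) : ENNReal :=
  if x = ⊤ then 0 else ENNReal.ofReal (Real.exp (-x.toReal))

lemma expNeg_ofReal {a : ℝ} (ha : 0 ≤ a) :
    expNeg (ENNReal.ofReal a) = ENNReal.ofReal (exp (-a)) := by
  rw [expNeg, if_neg ENNReal.ofReal_ne_top, ENNReal.toReal_ofReal ha]

lemma expNeg_antitone : Antitone expNeg := by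
  intro a b hab
  unfold expNeg
  rcases eq_or_ne b ⊤ with rfl | hb
  · simp
  · have ha : a ≠ ⊤ := ne_top_of_le_ne_top hb hab
    rw [if_neg hb, if_neg ha]
    gcongr

lemma expNeg_add (a b : ℝ≥0∞) : expNeg (a + b) = expNeg a * expNeg b := by
  unfold expNeg
  rcases eq_or_ne a ⊤ with rfl | ha
  · simp
  rcases eq_or_ne b ⊤ with rfl | hb
  · simp
  · rw [if_neg ha, if_neg hb, if_neg (ENNReal.add_ne_top.2 ⟨ha, hb⟩), ENNReal.toReal_add ha hb,
      neg_add, exp_add, ENNReal.ofReal_mul (exp_nonneg _)]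

lemma HasDerivAt.nonpos_of_antitoneOn_Ici {f : ℝ → ℝ} {f' x : ℝ} (hf : HasDerivAt f f' x)
    (hanti : AntitoneOn f (Ici x)) : f' ≤ 0 := by
  refine hf.hasDerivWithinAt.nonpos_of_antitoneOn ?_ hanti
  rw [accPt_principal_iff_clusterPt]
  exact mem_closure_iff_clusterPt.1 (by simp)

lemma lintegral_Ioi_ofReal_deriv_eq {g g' : ℝ → ℝ} {a l : ℝ}
    (hderiv : ∀ x ∈ Ici a, HasDerivAt g (g' x) x) (hg' : ∀ x ∈ Ioi a, 0 ≤ g' x)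
    (hg : Tendsto g atTop (𝓝 l)) :
    ∫⁻ x in Ioi a, ENNReal.ofReal (g' x) = ENNReal.ofReal (l - g a) := by
  rw [← integral_Ioi_of_hasDerivAt_of_nonneg' hderiv hg' hg,
    ofReal_integral_eq_lintegral_ofReal (integrableOn_Ioi_deriv_of_nonneg' hderiv hg' hg)
      ((ae_restrict_iff' measurableSet_Ioi).2 (ae_of_all _ hg'))]

section LogAntiderivative

variable {L L' : ℝ → ℝ} {m t : ℝ}

lemma lintegral_Ioi_neg_deriv_div_one_add_mul (ht : 0 < t) (hL : ∀ x, m ≤ x → 0 ≤ L x)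
    (hderiv : ∀ x, m ≤ x → HasDerivAt L (L' x) x) (hanti : AntitoneOn L (Ici m))
    (hlim : Tendsto L atTop (𝓝 0)) :
    ∫⁻ x in Ioi m, ENNReal.ofReal (-L' x / (1 + t * L x)) =
      ENNReal.ofReal (log (1 + t * L m) / t) := by
  have hpos : ∀ x, m ≤ x → 0 < 1 + t * L x := fun x hx => by
    have := hL x hx
    positivity
  have hlog : ∀ x ∈ Ici m, HasDerivAt (fun y => -(log (1 + t * L y) / t))
      (-L' x / (1 + t * L x)) x := fun x hx => by
    refine ((((hderiv x hx).const_mul t).const_add 1).log (hpos x hx).ne').div_const t |>.neg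
      |>.congr_deriv ?_
    field_simp
  have hlog' : ∀ x ∈ Ioi m, 0 ≤ -L' x / (1 + t * L x) := fun x hx =>
    div_nonneg (neg_nonneg.2 <| (hderiv x hx.out.le).nonpos_of_antitoneOn_Ici <|
      hanti.mono (Ici_subset_Ici.2 hx.out.le)) (hpos x hx.out.le).le
  have hlim' : Tendsto (fun y => -(log (1 + t * L y) / t)) atTop (𝓝 0) := by
    simpa using (((hlim.const_mul t).const_add 1).log (by simp)).div_const t |>.neg
  rw [lintegral_Ioi_ofReal_deriv_eq hlog hlog' hlim', zero_sub, neg_neg]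

lemma ofReal_mul_log_le_lintegral {ζ : ℝ} (ht : 0 < t) (hζ : 0 ≤ ζ)
    (hL : ∀ x, m ≤ x → 0 ≤ L x) (hderiv : ∀ x, m ≤ x → HasDerivAt L (L' x) x)
    (hanti : AntitoneOn L (Ici m)) (hlim : Tendsto L atTop (𝓝 0))
    (hreg : ∀ x, m ≤ x → ζ * -L' x ≤ x * L x) :
    ENNReal.ofReal (ζ / t * log (1 + t * L m)) ≤
      ∫⁻ x in Ioi m, ENNReal.ofReal (x * L x / (1 + t * L x)) := calc
  _ = ENNReal.ofReal ζ * ENNReal.ofReal (log (1 + t * L m) / t) := by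
    rw [← ENNReal.ofReal_mul hζ, div_mul_eq_mul_div, mul_div_assoc]
  _ = ∫⁻ x in Ioi m, ENNReal.ofReal ζ * ENNReal.ofReal (-L' x / (1 + t * L x)) := by
    rw [lintegral_const_mul' _ _ ENNReal.ofReal_ne_top,
      lintegral_Ioi_neg_deriv_div_one_add_mul ht hL hderiv hanti hlim]
  _ ≤ _ := setLIntegral_mono' measurableSet_Ioi fun x hx => by
    have := hL x hx.out.le
    rw [← ENNReal.ofReal_mul hζ, ← mul_div_assoc]
    exact ENNReal.ofReal_le_ofReal <|
      div_le_div_of_nonneg_right (hreg x hx.out.le) (by positivity)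

end LogAntiderivative

lemma lintegral_Ioi_mul_one_add_mul_rpow_neg_le {c β : ℝ} (hc : 0 < c) (hβ : 2 < β) :
    ∫⁻ t in Ioi 0, ENNReal.ofReal (t * (1 + t * c) ^ (-β)) ≤
      ENNReal.ofReal ((β - 2)⁻¹ / c ^ 2) := by
  have hpos : ∀ t, 0 ≤ t → 0 < 1 + t * c := fun t ht => by positivity
  have hderiv : ∀ t ∈ Ici (0 : ℝ),
      HasDerivAt (fun s => -((1 + s * c) ^ (2 - β) / ((β - 2) * c ^ 2)))
        ((1 + t * c) ^ (1 - β) / c) t := fun t ht => by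
    refine ((((hasDerivAt_id t).mul_const c).const_add 1).rpow_const (p := 2 - β)
      (Or.inl (hpos t ht).ne')).div_const ((β - 2) * c ^ 2) |>.neg |>.congr_deriv ?_
    have : β - 2 ≠ 0 := by linarith
    rw [id, show 2 - β - 1 = 1 - β by ring]
    field_simp
    ring
  have hlim : Tendsto (fun s => -((1 + s * c) ^ (2 - β) / ((β - 2) * c ^ 2))) atTop (𝓝 0) := by
    have hbase : Tendsto (fun s => 1 + s * c) atTop atTop :=
      tendsto_atTop_add_const_left _ 1 (tendsto_id.atTop_mul_const hc)
    have := ((tendsto_rpow_neg_atTop (by linarith : 0 < β - 2)).comp hbase).div_const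
      ((β - 2) * c ^ 2) |>.neg
    simpa [Function.comp_def] using this
  calc _ ≤ ∫⁻ t in Ioi 0, ENNReal.ofReal ((1 + t * c) ^ (1 - β) / c) :=
        setLIntegral_mono' measurableSet_Ioi fun t ht => by
          refine ENNReal.ofReal_le_ofReal ?_
          rw [sub_eq_add_neg, rpow_add (hpos t ht.out.le), rpow_one, mul_div_right_comm]
          exact mul_le_mul_of_nonneg_right (by rw [le_div_iff₀ hc]; linarith)
            (rpow_pos_of_pos (hpos t ht.out.le) _).le
    _ = _ := by
        rw [lintegral_Ioi_ofReal_deriv_eq hderiv (fun t ht => by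
          have := hpos t ht.out.le; positivity) hlim, zero_mul, add_zero, one_rpow, zero_sub,
          neg_neg]
        field_simp

lemma ofReal_mul_expNeg_le_mul_rpow {lam ζ r t c : ℝ} {J : ℝ≥0∞} (hlam : 0 ≤ lam) (hζ : 0 ≤ ζ)
    (hr : 0 ≤ r) (ht : 0 < t) (hc : 0 ≤ c)
    (hJ : ENNReal.ofReal (ζ / t * log (1 + t * c)) ≤ J) :
    ENNReal.ofReal (2 * π * lam * r * t) *
        expNeg (ENNReal.ofReal (π * lam * r ^ 2) + ENNReal.ofReal (2 * π * lam * t) * J) ≤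
      ENNReal.ofReal (2 * π * lam * r * exp (-(π * lam * r ^ 2))) *
        ENNReal.ofReal (t * (1 + t * c) ^ (-(2 * π * lam * ζ))) := by
  have hbase : 0 < 1 + t * c := by positivity
  have hlog : 0 ≤ log (1 + t * c) := log_nonneg (by nlinarith)
  have hexponent : ENNReal.ofReal (2 * π * lam * ζ * log (1 + t * c)) ≤
      ENNReal.ofReal (2 * π * lam * t) * J := calc
    _ = ENNReal.ofReal (2 * π * lam * t) * ENNReal.ofReal (ζ / t * log (1 + t * c)) := by
      rw [← ENNReal.ofReal_mul (by positivity)]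
      field_simp
    _ ≤ _ := by gcongr
  calc _ ≤ ENNReal.ofReal (2 * π * lam * r * t) * (ENNReal.ofReal (exp (-(π * lam * r ^ 2))) *
        ENNReal.ofReal (exp (-(2 * π * lam * ζ * log (1 + t * c))))) := by
        rw [expNeg_add, expNeg_ofReal (by positivity)]
        gcongr
        exact (expNeg_antitone hexponent).trans_eq (expNeg_ofReal (by positivity))
    _ = _ := by
        rw [← ENNReal.ofReal_mul (by positivity), ← ENNReal.ofReal_mul (by positivity),
          ← ENNReal.ofReal_mul (by positivity), rpow_def_of_pos hbase]
        ring_nf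

lemma lintegral_Ioi_radial_div_sq_lt_top {L : ℝ → ℝ} {r₀ lam K : ℝ} (hlam : 0 ≤ lam)
    (hK : 0 ≤ K)
    (hfin : ∫⁻ r in Ioi r₀, ENNReal.ofReal (r / L r ^ 2 * exp (-(π * lam * r ^ 2))) < ⊤) :
    ∫⁻ r in Ioi 0, ENNReal.ofReal (2 * π * lam * r * exp (-(π * lam * r ^ 2))) *
      ENNReal.ofReal (K / L (max r r₀) ^ 2) < ⊤ := by
  set f : ℝ → ℝ := fun r => 2 * π * lam * r * exp (-(π * lam * r ^ 2))
  set g : ℝ → ℝ≥0∞ := fun r => ENNReal.ofReal (f r) * ENNReal.ofReal (K / L (max r r₀) ^ 2)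
  have hnear : ∫⁻ r in Ioc 0 r₀, g r < ⊤ := by
    simp only [g]
    rw [setLIntegral_congr_fun measurableSet_Ioc fun r hr => by rw [max_eq_right hr.2],
      lintegral_mul_const' _ _ ENNReal.ofReal_ne_top]
    exact ENNReal.mul_lt_top (((by fun_prop : Continuous f).integrableOn_Icc.mono_set
      Ioc_subset_Icc_self).lintegral_lt_top) ENNReal.ofReal_lt_top
  have hfar : ∫⁻ r in Ioi r₀, g r =
      ENNReal.ofReal (2 * π * lam * K) *
        ∫⁻ r in Ioi r₀, ENNReal.ofReal (r / L r ^ 2 * exp (-(π * lam * r ^ 2))) := by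
    rw [← lintegral_const_mul' _ _ ENNReal.ofReal_ne_top]
    refine setLIntegral_congr_fun measurableSet_Ioi fun r hr => ?_
    simp only [g, f]
    rw [max_eq_left hr.out.le, ← ENNReal.ofReal_mul' (by positivity),
      ← ENNReal.ofReal_mul (by positivity)]
    congr 1
    ring
  calc _ ≤ ∫⁻ r in Ioc 0 r₀ ∪ Ioi r₀, g r := lintegral_mono_set Ioi_subset_Ioc_union_Ioi
    _ ≤ _ := lintegral_union_le _ _ _
    _ < ⊤ := ENNReal.add_lt_top.2 ⟨hnear, hfar ▸ ENNReal.mul_lt_top ENNReal.ofReal_lt_top hfin⟩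

theorem second_negative_moment_finite_general
    (r₀ ζ lam lam_c : ℝ) (hζ : 0 < ζ) (L L' : ℝ → ℝ)
    (hLmeas : Measurable L)
    (hLpos : ∀ x, 0 ≤ x → 0 < L x)
    (hLderiv : ∀ x, r₀ ≤ x → HasDerivAt L (L' x) x)
    (hLmono : ∀ x y, r₀ ≤ x → x ≤ y → L y ≤ L x)
    (hLlim : Filter.Tendsto L Filter.atTop (nhds 0))
    (hreg : ∀ x, r₀ ≤ x → ζ * (-(L' x)) ≤ x * L x)
    (hfin : ∀ l : ℝ, lam_c < l →
      (∫⁻ r in Set.Ioi r₀,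
        ENNReal.ofReal (r / L r ^ 2 * Real.exp (-(Real.pi * l * r ^ 2)))) < ⊤)
    (hlam : max lam_c (1 / (Real.pi * ζ)) < lam) :
    (∫⁻ t in Set.Ioi (0 : ℝ), ∫⁻ r in Set.Ioi (0 : ℝ),
        ENNReal.ofReal (2 * Real.pi * lam * r * t) *
          expNeg (ENNReal.ofReal (Real.pi * lam * r ^ 2) +
            ENNReal.ofReal (2 * Real.pi * lam * t) *
              ∫⁻ x in Set.Ioi r, ENNReal.ofReal (x * L x / (1 + t * L x)))) < ⊤ := by
  obtain ⟨hlam_c, hlam_ζ⟩ := max_lt_iff.1 hlam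
  have hlam₀ : 0 < lam := (by positivity : 0 < 1 / (π * ζ)).trans hlam_ζ
  set β := 2 * π * lam * ζ
  have hβ : 2 < β := by
    rw [div_lt_iff₀ (by positivity)] at hlam_ζ
    linarith
  have hinner : ∀ t > 0, ∀ r > 0, ENNReal.ofReal (ζ / t * log (1 + t * L (max r r₀))) ≤
      ∫⁻ x in Ioi r, ENNReal.ofReal (x * L x / (1 + t * L x)) := fun t ht r hr =>
    have hm : ∀ {x}, max r r₀ ≤ x → r₀ ≤ x := (le_max_right _ _).trans
    (ofReal_mul_log_le_lintegral ht hζ.le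
      (fun x hx => (hLpos x (hr.le.trans ((le_max_left _ _).trans hx))).le)
      (fun x hx => hLderiv x (hm hx)) (fun x hx y _ hxy => hLmono x y (hm hx) hxy) hLlim
      (fun x hx => hreg x (hm hx))).trans
      (lintegral_mono_set (Ioi_subset_Ioi (le_max_left _ _)))
  have hLmax : ∀ r > 0, 0 < L (max r r₀) := fun r hr => hLpos _ (hr.le.trans (le_max_left _ _))
  set F : ℝ → ℝ≥0∞ := fun r => ENNReal.ofReal (2 * π * lam * r * exp (-(π * lam * r ^ 2)))
  calc _ ≤ ∫⁻ t in Ioi 0, ∫⁻ r in Ioi 0,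
        F r * ENNReal.ofReal (t * (1 + t * L (max r r₀)) ^ (-β)) :=
        setLIntegral_mono' measurableSet_Ioi fun t ht => setLIntegral_mono' measurableSet_Ioi
          fun r hr => ofReal_mul_expNeg_le_mul_rpow hlam₀.le hζ.le hr.out.le ht (hLmax r hr).le
            (hinner t ht r hr)
    _ = ∫⁻ r in Ioi 0, F r *
          ∫⁻ t in Ioi 0, ENNReal.ofReal (t * (1 + t * L (max r r₀)) ^ (-β)) := by
        rw [lintegral_lintegral_swap (by fun_prop)]
        exact lintegral_congr fun r => lintegral_const_mul' _ _ ENNReal.ofReal_ne_top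
    _ ≤ ∫⁻ r in Ioi 0, F r * ENNReal.ofReal ((β - 2)⁻¹ / L (max r r₀) ^ 2) :=
        setLIntegral_mono' measurableSet_Ioi fun r hr => by
          gcongr
          exact lintegral_Ioi_mul_one_add_mul_rpow_neg_le (hLmax r hr) hβ
    _ < ⊤ := lintegral_Ioi_radial_div_sq_lt_top hlam₀.le (inv_nonneg.2 (by linarith))
        (hfin lam hlam_c)

/-- Corollary 2, Rayleigh fading: Let `L : [0,∞) → (0,∞)` be measurable, and
suppose there exist `r₀ ≥ 0` and `ζ > 0` such that `L` is differentiable and nonincreasing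
on `[r₀,∞)`, `L(x) → 0` as `x → ∞`, and `x·L(x) ≥ ζ·(−L′(x))` for all `x ≥ r₀`. Suppose
moreover there is `λ_c ≥ 0` with `∫_{r₀}^∞ (r/L(r)²)·e^{−πλr²} dr < ∞` for all `λ > λ_c`.
Then for every `λ > max(λ_c, 1/(πζ))`, the double integral
`∫_0^∞ ∫_0^∞ 2πλ·r·t·exp(−πλr² − 2πλ·t·∫_{r}^∞ x·L(x)/(1+t·L(x)) dx) dr dt` is finite. -/
theorem second_negative_moment_finite
    (r₀ ζ lam lam_c : ℝ) (hr₀ : 0 ≤ r₀) (hζ : 0 < ζ) (L L' : ℝ → ℝ)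
    (hLmeas : Measurable L)
    (hLpos : ∀ x, 0 ≤ x → 0 < L x)
    (hLderiv : ∀ x, r₀ ≤ x → HasDerivAt L (L' x) x)
    (hLmono : ∀ x y, r₀ ≤ x → x ≤ y → L y ≤ L x)
    (hLlim : Filter.Tendsto L Filter.atTop (nhds 0))
    (hreg : ∀ x, r₀ ≤ x → ζ * (-(L' x)) ≤ x * L x)
    (hlam_c : 0 ≤ lam_c)
    (hfin : ∀ l : ℝ, lam_c < l →
      (∫⁻ r in Set.Ioi r₀,
        ENNReal.ofReal (r / L r ^ 2 * Real.exp (-(Real.pi * l * r ^ 2)))) < ⊤)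
    (hlam : max lam_c (1 / (Real.pi * ζ)) < lam) :
    (∫⁻ t in Set.Ioi (0 : ℝ), ∫⁻ r in Set.Ioi (0 : ℝ),
        ENNReal.ofReal (2 * Real.pi * lam * r * t) *
          expNeg (ENNReal.ofReal (Real.pi * lam * r ^ 2) +
            ENNReal.ofReal (2 * Real.pi * lam * t) *
              ∫⁻ x in Set.Ioi r, ENNReal.ofReal (x * L x / (1 + t * L x)))) < ⊤ :=
  second_negative_moment_finite_general r₀ ζ lam lam_c hζ L L' hLmeas hLpos hLderiv hLmono hLlim
    hreg hfin hlam
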